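/- Let l₁, l₂ > 0 with l₁ + l₂ < 1, and for y₁, y₂ ∈ ℝ define φ(a) = a·(1 − √(l₁²/(y₁/√a + l₁) + l₂²/(y₂/√a + l₂) + (1−l₁−l₂)²/(1 − y₁/√a − l₁ − y₂/√a − l₂))). Then as a → ∞, φ(a) → −(1/(2(1−ρ²)))[(y₁/√σ₁₁)² + (y₂/√σ₂₂)² − 2ρ(y₁/√σ₁₁)(y₂/√σ₂₂)], where σ₁₁ = l₁(1−l₁), σ₂₂ = l₂(1−l₂), and ρ = −√(l₁l₂/((1−l₁)(1−l₂))). -/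

import Mathlib

/-!
With `p = (l₁, l₂, 1 - l₁ - l₂)` and `u = (y₁, y₂, -(y₁ + y₂)) / √a`, the radicand is
`∑ pᵢ² / (uᵢ + pᵢ)`. As `∑ pᵢ = 1` and `∑ uᵢ = 0`, the identity `p² / (u + p) = p - u + u² / (u + p)`
turns it into `1 + g(a) / a` with `g(a) → c = ∑ yᵢ² / pᵢ`, and then
`a (1 - √(1 + g/a)) = -g / (1 + √(1 + g/a)) → -c / 2`. The limit in the statement is `-c / 2`
because `c` is the quadratic form of `Σ⁻¹ = diag(1/l₁, 1/l₂) + 𝟙𝟙ᵀ / (1 - l₁ - l₂)`.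
-/

open Real Filter Topology Finset

lemma sq_div_add_eq {p u : ℝ} (h : u + p ≠ 0) : p ^ 2 / (u + p) = p - u + u ^ 2 / (u + p) := by
  field_simp
  ring

lemma sum_sq_div_add_eq_one_add {ι : Type*} (s : Finset ι) {p u : ι → ℝ}
    (hp : ∑ i ∈ s, p i = 1) (hu : ∑ i ∈ s, u i = 0) (hne : ∀ i ∈ s, u i + p i ≠ 0) :
    ∑ i ∈ s, p i ^ 2 / (u i + p i) = 1 + ∑ i ∈ s, u i ^ 2 / (u i + p i) := by
  rw [sum_congr rfl fun i hi => sq_div_add_eq (hne i hi), sum_add_distrib, sum_sub_distrib, hp, hu,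
    sub_zero]

lemma mul_one_sub_sqrt_one_add_div_eq {a x : ℝ} (ha : a ≠ 0) (hx : 0 ≤ 1 + x / a) :
    a * (1 - √(1 + x / a)) = -x / (1 + √(1 + x / a)) := by
  rw [eq_div_iff (by positivity)]
  linear_combination (-a) * sq_sqrt hx - mul_div_cancel₀ x ha

lemma tendsto_mul_one_sub_sqrt_one_add_div {g : ℝ → ℝ} {c : ℝ} (hg : Tendsto g atTop (𝓝 c)) :
    Tendsto (fun a => a * (1 - √(1 + g a / a))) atTop (𝓝 (-c / 2)) := by
  have hga : Tendsto (fun a => 1 + g a / a) atTop (𝓝 1) := by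
    simpa using (hg.div_atTop tendsto_id).const_add 1
  have hsqrt : Tendsto (fun a => √(1 + g a / a)) atTop (𝓝 1) := by
    simpa using hga.sqrt
  have hquot : Tendsto (fun a => -g a / (1 + √(1 + g a / a))) atTop (𝓝 (-c / 2)) := by
    rw [← one_add_one_eq_two]
    exact hg.neg.div (hsqrt.const_add 1) (by norm_num)
  refine hquot.congr' ?_
  filter_upwards [eventually_gt_atTop 0, hga.eventually (eventually_ge_nhds zero_lt_one)]
    with a ha hx
  exact (mul_one_sub_sqrt_one_add_div_eq ha.ne' hx).symm

lemma tendsto_mul_one_sub_sqrt_sum_sq_div_add {ι : Type*} [Fintype ι] {p y : ι → ℝ}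
    (hp : ∑ i, p i = 1) (hy : ∑ i, y i = 0) (hp₀ : ∀ i, p i ≠ 0) :
    Tendsto (fun a => a * (1 - √(∑ i, p i ^ 2 / (y i / √a + p i)))) atTop
      (𝓝 (-(∑ i, y i ^ 2 / p i) / 2)) := by
  have hden : ∀ i, Tendsto (fun a => y i / √a + p i) atTop (𝓝 (p i)) := fun i => by
    simpa using (tendsto_const_nhds.div_atTop tendsto_sqrt_atTop).add_const (p i)
  have hg : Tendsto (fun a => ∑ i, y i ^ 2 / (y i / √a + p i)) atTop
      (𝓝 (∑ i, y i ^ 2 / p i)) :=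
    tendsto_finsetSum _ fun i _ => tendsto_const_nhds.div (hden i) (hp₀ i)
  refine (tendsto_mul_one_sub_sqrt_one_add_div hg).congr' ?_
  filter_upwards [eventually_gt_atTop 0, eventually_all.2 fun i => (hden i).eventually_ne (hp₀ i)]
    with a ha hne
  rw [sum_sq_div_add_eq_one_add univ hp (by rw [← sum_div, hy, zero_div]) fun i _ => hne i,
    sum_div]
  congr 4
  refine sum_congr rfl fun i _ => ?_
  rw [div_pow, sq_sqrt ha.le]
  ring

lemma bivariate_gaussian_exponent_eq {l₁ l₂ : ℝ} (h1 : 0 < l₁) (h2 : 0 < l₂) (h12 : l₁ + l₂ < 1)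
    (y₁ y₂ : ℝ) {σ₁₁ σ₂₂ ρ : ℝ} (hσ₁₁ : σ₁₁ = l₁ * (1 - l₁)) (hσ₂₂ : σ₂₂ = l₂ * (1 - l₂))
    (hρ : ρ = -√(l₁ * l₂ / ((1 - l₁) * (1 - l₂)))) :
    -(1 / (2 * (1 - ρ ^ 2))) *
        ((y₁ / √σ₁₁) ^ 2 + (y₂ / √σ₂₂) ^ 2 - 2 * ρ * (y₁ / √σ₁₁) * (y₂ / √σ₂₂)) =
      -(y₁ ^ 2 / l₁ + y₂ ^ 2 / l₂ + (y₁ + y₂) ^ 2 / (1 - l₁ - l₂)) / 2 := by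
  have h1' : 0 < 1 - l₁ := by linarith
  have h2' : 0 < 1 - l₂ := by linarith
  have h3 : 0 < 1 - l₁ - l₂ := by linarith
  have hσ₁₁_pos : 0 < σ₁₁ := hσ₁₁ ▸ mul_pos h1 h1'
  have hσ₂₂_pos : 0 < σ₂₂ := hσ₂₂ ▸ mul_pos h2 h2'
  have hρ_sq : 1 - ρ ^ 2 = (1 - l₁ - l₂) / ((1 - l₁) * (1 - l₂)) := by
    rw [hρ, neg_sq, sq_sqrt (by positivity)]
    field_simp
    ring
  have hρ_mul : ρ * (√σ₁₁ * √σ₂₂) = -(l₁ * l₂) := by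
    rw [hρ, hσ₁₁, hσ₂₂, ← sqrt_mul (by positivity), neg_mul, ← sqrt_mul (by positivity)]
    congr 1
    rw [show l₁ * l₂ / ((1 - l₁) * (1 - l₂)) * (l₁ * (1 - l₁) * (l₂ * (1 - l₂))) = (l₁ * l₂) ^ 2 by
      field_simp]
    exact sqrt_sq (by positivity)
  have hcross : 2 * ρ * (y₁ / √σ₁₁) * (y₂ / √σ₂₂) =
      -(2 * l₁ * l₂ * y₁ * y₂ / (√σ₁₁ * √σ₂₂) ^ 2) := by
    have hs₁ := sqrt_pos.2 hσ₁₁_pos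
    have hs₂ := sqrt_pos.2 hσ₂₂_pos
    field_simp
    linear_combination y₁ * y₂ * hρ_mul
  rw [div_pow, div_pow, hcross, mul_pow, sq_sqrt hσ₁₁_pos.le, sq_sqrt hσ₂₂_pos.le, hρ_sq, hσ₁₁,
    hσ₂₂]
  field_simp
  ring

/-- The exponent limit in the finite-dimensional CLT for the normalized inverse-Gaussian
process: φ(a) → −(1/(2(1−ρ²)))[(y₁/√σ₁₁)² + (y₂/√σ₂₂)² − 2ρ(y₁/√σ₁₁)(y₂/√σ₂₂)]
as a → ∞, where σ₁₁ = l₁(1−l₁), σ₂₂ = l₂(1−l₂), ρ = −√(l₁l₂/((1−l₁)(1−l₂))). -/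
theorem exponent_limit (l₁ l₂ : ℝ) (h1 : 0 < l₁) (h2 : 0 < l₂) (h12 : l₁ + l₂ < 1)
    (y₁ y₂ σ₁₁ σ₂₂ ρ : ℝ)
    (hσ₁₁ : σ₁₁ = l₁ * (1 - l₁)) (hσ₂₂ : σ₂₂ = l₂ * (1 - l₂))
    (hρ : ρ = -Real.sqrt (l₁ * l₂ / ((1 - l₁) * (1 - l₂)))) :
    Tendsto (fun a : ℝ => a * (1 - Real.sqrt
        (l₁ ^ 2 / (y₁ / Real.sqrt a + l₁) + l₂ ^ 2 / (y₂ / Real.sqrt a + l₂) +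
          (1 - l₁ - l₂) ^ 2 /
            (1 - y₁ / Real.sqrt a - l₁ - y₂ / Real.sqrt a - l₂))))
      atTop
      (nhds (-(1 / (2 * (1 - ρ ^ 2))) *
        ((y₁ / Real.sqrt σ₁₁) ^ 2 + (y₂ / Real.sqrt σ₂₂) ^ 2 -
          2 * ρ * (y₁ / Real.sqrt σ₁₁) * (y₂ / Real.sqrt σ₂₂)))) := by
  rw [bivariate_gaussian_exponent_eq h1 h2 h12 y₁ y₂ hσ₁₁ hσ₂₂ hρ]
  have hlim := tendsto_mul_one_sub_sqrt_sum_sq_div_add (p := ![l₁, l₂, 1 - l₁ - l₂])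
    (y := ![y₁, y₂, -(y₁ + y₂)]) (by simp [Fin.sum_univ_three]) (by simp [Fin.sum_univ_three])
    (by intro i; fin_cases i <;> simp <;> linarith)
  simp only [Fin.sum_univ_three, Matrix.cons_val_zero, Matrix.cons_val_one, Matrix.cons_val_two,
    Matrix.head_cons, Matrix.tail_cons, neg_sq] at hlim
  convert hlim using 6
  ring
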